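/- arXiv:2106.05220 — 5 statements merged into one kernel-verified Lean document; each statement's English description precedes it below -/
import Mathlib

section
/- Let K ≥ D ≥ L ≥ 1 and T = K-D+1. For each i ∈ [T], let W_i = {i, i+1, …, i+D-1} ⊆ [K], and let U_i be an L×K matrix over F_q whose columns outside W_i are zero and whose L×D submatrix V_i on the columns W_i is MDS (every L×L submatrix invertible). Then the rank of the TL×K matrix obtained by stacking U_1,…,U_T vertically is at least K-D+L. -/
set_option maxHeartbeats 1000000

lemma key_vanish (F : Type*) [Field F] (K D L : ℕ)
    (hL : 1 ≤ L) (hLD : L ≤ D) (hDK : D ≤ K)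
    (U : Fin (K - D + 1) → Matrix (Fin L) (Fin K) F)
    (hzero : ∀ (i : Fin (K - D + 1)) (l : Fin L) (j : Fin K),
      ¬ ((i : ℕ) ≤ (j : ℕ) ∧ (j : ℕ) < (i : ℕ) + D) → U i l j = 0)
    (hMDS : ∀ (i : Fin (K - D + 1)) (f : Fin L → Fin D), Function.Injective f →
      (Matrix.det (fun a b : Fin L =>
        U i a ⟨(i : ℕ) + (f b : ℕ), by have := (f b).isLt; omega⟩)) ≠ 0)
    (v : Fin K → F) (hv : ∀ i, (U i).mulVec v = 0)
    (h0 : ∀ j : Fin K, (j : ℕ) < D - L → v j = 0) :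
    v = 0 := by
  have main : ∀ n, ∀ j : Fin K, (j : ℕ) = n → v j = 0 := by
    intro n
    induction n using Nat.strong_induction_on with
    | _ n ih =>
      intro j hj
      by_cases hn : n < D - L
      · exact h0 j (by omega)
      push_neg at hn
      have hnK : n < K := hj ▸ j.isLt
      set iN : ℕ := n + 1 - D with hiN
      have hi1 : iN ≤ K - D := by omega
      have hle1 : iN + (D - L) ≤ n := by omega
      have hle2 : n < iN + D := by omega
      set i : Fin (K - D + 1) := ⟨iN, by omega⟩ with hidef
      have hfinj : Function.Injective
          (fun b : Fin L => (⟨D - L + (b : ℕ), by omega⟩ : Fin D)) := by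
        intro a b hab
        have h := congrArg Fin.val hab
        simp only at h
        exact Fin.ext (by omega)
      have hdet : (Matrix.det (fun a b : Fin L =>
          U i a ⟨iN + (D - L + (b : ℕ)), by omega⟩)) ≠ 0 :=
        hMDS i (fun b : Fin L => (⟨D - L + (b : ℕ), by omega⟩ : Fin D)) hfinj
      set M : Matrix (Fin L) (Fin L) F :=
        fun a b => U i a ⟨iN + (D - L + (b : ℕ)), by omega⟩ with hM
      set x : Fin L → F := fun b => v ⟨iN + (D - L + (b : ℕ)), by omega⟩ with hx
      have hMx : M.mulVec x = 0 := by
        funext a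
        have h1 : (U i).mulVec v a = 0 := congrFun (hv i) a
        have h2 : (U i).mulVec v a = ∑ j' : Fin K, U i a j' * v j' := by
          simp [Matrix.mulVec, dotProduct]
        classical
        set e : Fin L → Fin K :=
          fun b => (⟨iN + (D - L + (b : ℕ)), by omega⟩ : Fin K) with he
        have heinj : Function.Injective e := by
          intro a b hab
          have h := congrArg Fin.val hab
          simp only [he] at h
          exact Fin.ext (by omega)
        have hvanish : ∀ j' ∈ (Finset.univ : Finset (Fin K)),
            j' ∉ Finset.image e Finset.univ → U i a j' * v j' = 0 := by
          intro j' _ hj'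
          by_cases hlt : (j' : ℕ) < iN + (D - L)
          · have : v j' = 0 := ih (j' : ℕ) (by omega) j' rfl
            rw [this, mul_zero]
          · push_neg at hlt
            by_cases hbig : iN + D ≤ (j' : ℕ)
            · have : U i a j' = 0 := by
                apply hzero
                intro ⟨_, h2⟩
                simp only [hidef] at h2
                omega
              rw [this, zero_mul]
            · push_neg at hbig
              exfalso
              apply hj'
              rw [Finset.mem_image]
              refine ⟨⟨(j' : ℕ) - (iN + (D - L)), by omega⟩, Finset.mem_univ _, ?_⟩
              simp only [he]
              exact Fin.ext (by simp; omega)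
        have hsub := Finset.sum_subset (Finset.subset_univ (Finset.image e Finset.univ))
          hvanish
        have himg : ∑ j' ∈ Finset.image e Finset.univ, U i a j' * v j'
            = ∑ b : Fin L, U i a (e b) * v (e b) :=
          Finset.sum_image (fun b _ c _ h => heinj h)
        have h3 : M.mulVec x a = ∑ b : Fin L, M a b * x b := by
          simp [Matrix.mulVec, dotProduct]
        have h4 : ∀ b : Fin L, M a b * x b = U i a (e b) * v (e b) := by
          intro b; rfl
        rw [h3]
        simp only [h4]
        rw [← himg, hsub, ← h2, h1]
        rfl
      have hx0 : x = 0 := by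
        classical
        exact Matrix.eq_zero_of_mulVec_eq_zero hdet hMx
      have hvx : v j = x ⟨n - (iN + (D - L)), by omega⟩ := by
        simp only [hx]
        congr 1
        exact Fin.ext (by simp [hj]; omega)
      rw [hvx, hx0]
      rfl
  funext j
  exact main (j : ℕ) j rfl

/-- Stacking T = K-D+1 matrices U_i, each of which is an L×K matrix supported on the
window W_i = {i,…,i+D-1} whose L×D submatrix on W_i is MDS, yields a matrix of rank
at least K-D+L. (Indices are 0-based: W_i = {i,…,i+D-1} for i ∈ {0,…,K-D}.) -/
theorem stmt_4 (F : Type*) [Field F] [Fintype F] (K D L : ℕ)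
    (hL : 1 ≤ L) (hLD : L ≤ D) (hDK : D ≤ K)
    (U : Fin (K - D + 1) → Matrix (Fin L) (Fin K) F)
    (hzero : ∀ (i : Fin (K - D + 1)) (l : Fin L) (j : Fin K),
      ¬ ((i : ℕ) ≤ (j : ℕ) ∧ (j : ℕ) < (i : ℕ) + D) → U i l j = 0)
    (hMDS : ∀ (i : Fin (K - D + 1)) (f : Fin L → Fin D), Function.Injective f →
      (Matrix.det (fun a b : Fin L =>
        U i a ⟨(i : ℕ) + (f b : ℕ), by omega⟩)) ≠ 0) :
    (K - D + L : ℕ) ≤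
      Matrix.rank (fun (p : Fin (K - D + 1) × Fin L) (j : Fin K) => U p.1 p.2 j) := by
  classical
  set M : Matrix (Fin (K - D + 1) × Fin L) (Fin K) F :=
    fun p j => U p.1 p.2 j with hMdef
  set π : (Fin K → F) →ₗ[F] (Fin (D - L) → F) :=
    LinearMap.funLeft F F (fun j : Fin (D - L) => (⟨(j : ℕ), by omega⟩ : Fin K)) with hπ
  have hinj : Function.Injective
      (π.comp (LinearMap.ker M.mulVecLin).subtype) := by
    rw [← LinearMap.ker_eq_bot]
    rw [Submodule.eq_bot_iff]
    rintro ⟨v, hvker⟩ hvz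
    have hvz0 := LinearMap.mem_ker.mp hvz
    have hvz' : ∀ j : Fin (D - L), v ⟨(j : ℕ), by omega⟩ = 0 := by
      intro j
      have := congrFun hvz0 j
      simpa [hπ, LinearMap.funLeft] using this
    have hv0 : M.mulVec v = 0 := by
      have := LinearMap.mem_ker.mp hvker
      rwa [Matrix.mulVecLin_apply] at this
    have hUv : ∀ i, (U i).mulVec v = 0 := by
      intro i
      funext a
      have := congrFun hv0 (i, a)
      simpa [Matrix.mulVec, dotProduct, hMdef] using this
    have hsmall : ∀ j : Fin K, (j : ℕ) < D - L → v j = 0 := by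
      intro j hj
      have := hvz' ⟨(j : ℕ), hj⟩
      convert this using 2
    have := key_vanish F K D L hL hLD hDK U hzero hMDS v hUv hsmall
    exact Subtype.ext this
  have hker_le : Module.finrank F (LinearMap.ker M.mulVecLin) ≤ D - L := by
    have := LinearMap.finrank_le_finrank_of_injective hinj
    simpa using this
  have hrn : M.rank + Module.finrank F (LinearMap.ker M.mulVecLin) = K := by
    have := LinearMap.finrank_range_add_finrank_ker M.mulVecLin
    simpa [Matrix.rank] using this
  omega
end

section
/- Let M ⊆ F_q^K be a linear subspace with the following property: for every D-subset W of [K] there exist L linearly independent vectors in M whose supports are contained in W (where 1 ≤ L ≤ D ≤ K). Then dim M ≥ K - D + L. -/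
/-- Submodule of vectors supported in `W`. -/
def suppSub (F : Type*) [Field F] {K : ℕ} (W : Finset (Fin K)) :
    Submodule F (Fin K → F) where
  carrier := {x | ∀ j ∉ W, x j = 0}
  add_mem' := by intro a b ha hb j hj; simp [ha j hj, hb j hj]
  zero_mem' := by intro j hj; rfl
  smul_mem' := by intro c x hx j hj; simp [hx j hj]

lemma suppSub_mono (F : Type*) [Field F] {K : ℕ} {W W' : Finset (Fin K)}
    (h : W ⊆ W') : suppSub F W ≤ suppSub F W' := by
  intro x hx j hj
  exact hx j (fun hc => hj (h hc))

lemma aux {F : Type*} [Field F] {K : ℕ} (M : Submodule F (Fin K → F)) :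
    ∀ (n d l : ℕ), K - d = n → 1 ≤ l → l ≤ d → d ≤ K →
    (∀ W : Finset (Fin K), W.card = d →
      l ≤ Module.finrank F ↥(M ⊓ suppSub F W)) →
    K - d + l ≤ Module.finrank F ↥M := by
  intro n
  induction n with
  | zero =>
    intro d l hn hl hld hdk h
    have hdK : d = K := by omega
    have h1 := h Finset.univ (by simp [hdK])
    have h2 : Module.finrank F ↥(M ⊓ suppSub F Finset.univ) ≤ Module.finrank F ↥M :=
      Submodule.finrank_mono inf_le_left
    omega
  | succ n ih =>
    intro d l hn hl hld hdk h
    have hdK : d < K := by omega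
    have key : ∀ W' : Finset (Fin K), W'.card = d + 1 →
        l + 1 ≤ Module.finrank F ↥(M ⊓ suppSub F W') := by
      intro W' hW'
      by_contra hc
      push_neg at hc
      have hcle : Module.finrank F ↥(M ⊓ suppSub F W') ≤ l := by omega
      have heq : ∀ j ∈ W', M ⊓ suppSub F (W'.erase j) = M ⊓ suppSub F W' := by
        intro j hj
        refine Submodule.eq_of_le_of_finrank_le
          (inf_le_inf_left M (suppSub_mono F (Finset.erase_subset j W'))) ?_
        have := h (W'.erase j) (by rw [Finset.card_erase_of_mem hj]; omega)
        omega
      -- the space M ⊓ suppSub F W' is nontrivial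
      have hj0 : ∃ j, j ∈ W' := Finset.card_pos.mp (by omega)
      obtain ⟨j0, hj0⟩ := hj0
      have hlpos : 1 ≤ Module.finrank F ↥(M ⊓ suppSub F W') := by
        have := h (W'.erase j0) (by rw [Finset.card_erase_of_mem hj0]; omega)
        rw [heq j0 hj0] at this
        omega
      have hne : (M ⊓ suppSub F W') ≠ ⊥ := by
        intro hbot
        rw [hbot] at hlpos
        simp at hlpos
      obtain ⟨x, hx, hx0⟩ := (Submodule.ne_bot_iff _).mp hne
      apply hx0
      funext j
      by_cases hjW : j ∈ W'
      · have : x ∈ M ⊓ suppSub F (W'.erase j) := (heq j hjW).symm ▸ hx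
        exact this.2 j (Finset.notMem_erase j W')
      · exact hx.2 j hjW
    have := ih (d + 1) (l + 1) (by omega) (by omega) (by omega) (by omega) key
    omega

/-- If a subspace M of F_q^K contains, for every D-subset W of [K], L linearly
independent vectors supported in W, then dim M ≥ K-D+L. -/
theorem stmt_5 (F : Type*) [Field F] [Fintype F] (K D L : ℕ)
    (hL : 1 ≤ L) (hLD : L ≤ D) (hDK : D ≤ K)
    (M : Submodule F (Fin K → F))
    (h : ∀ W : Finset (Fin K), W.card = D →
      ∃ v : Fin L → (Fin K → F), (∀ i, v i ∈ M) ∧ LinearIndependent F v ∧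
        ∀ i, ∀ j : Fin K, j ∉ W → v i j = 0) :
    K - D + L ≤ Module.finrank F M := by
  apply aux M (K - D) D L rfl hL hLD hDK
  intro W hW
  obtain ⟨v, hvM, hvi, hvs⟩ := h W hW
  set N := M ⊓ suppSub F W with hN
  have hmem : ∀ i, v i ∈ N := fun i => ⟨hvM i, fun j hj => hvs i j hj⟩
  let v' : Fin L → ↥N := fun i => ⟨v i, hmem i⟩
  have hvi' : LinearIndependent F v' := by
    apply LinearIndependent.of_comp N.subtype
    convert hvi
    rfl
  have := hvi'.fintype_card_le_finrank
  simpa using this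
end

section
/- Let M be a (K-D)×K matrix over F_q all of whose (K-D)×(K-D) submatrices are invertible, let U be an L×K matrix of rank L with all rows supported in some fixed D-subset W of [K], and let Ĝ = [U; M] be their vertical concatenation. Then for every D-subset W̃ of [K], the subspace of the row space of Ĝ consisting of vectors supported in W̃ has dimension exactly L. -/
open Module Submodule Matrix


/-- If M is a (K-D)×K MDS matrix, U an L×K matrix of rank L with rows supported in a
D-subset W, and Ĝ = [U; M], then for every D-subset W̃ of [K] the subspace of the row
space of Ĝ consisting of vectors supported in W̃ has dimension exactly L. -/
theorem stmt_7 (F : Type*) [Field F] [Fintype F] (K D L : ℕ)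
    (hL : 1 ≤ L) (hLD : L ≤ D) (hDK : D ≤ K)
    (M : Matrix (Fin (K - D)) (Fin K) F)
    (hMDS : ∀ f : Fin (K - D) → Fin K, Function.Injective f →
      (Matrix.det (fun i j : Fin (K - D) => M i (f j))) ≠ 0)
    (W : Finset (Fin K)) (hW : W.card = D)
    (U : Matrix (Fin L) (Fin K) F) (hU : U.rank = L)
    (hsupp : ∀ l : Fin L, ∀ j : Fin K, j ∉ W → U l j = 0) :
    ∀ W' : Finset (Fin K), W'.card = D →
      Module.finrank F
        ↥(Submodule.span F (Set.range (fun i => Matrix.fromRows U M i)) ⊓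
          Submodule.pi ((↑W'ᶜ : Set (Fin K))) (fun _ => (⊥ : Submodule F F))) = L := by
  classical
  -- the restriction map to coordinates outside X
  have hcard : ∀ X : Finset (Fin K), X.card = D →
      Fintype.card (↑Xᶜ : Set (Fin K)) = K - D := by
    intro X hX
    rw [Fintype.card_congr (Equiv.subtypeEquivRight (fun a => by simp) :
        (↑Xᶜ : Set (Fin K)) ≃ {a // a ∈ Xᶜ}), Fintype.card_coe, Finset.card_compl, hX,
      Fintype.card_fin]
  let ψ : (X : Finset (Fin K)) → ((Fin K → F) →ₗ[F] ((↑Xᶜ : Set (Fin K)) → F)) :=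
    fun X => LinearMap.funLeft F F (Subtype.val)
  have key : ∀ X : Finset (Fin K), X.card = D →
      Function.Bijective ((ψ X).comp M.vecMulLinear) := by
    intro X hX
    let e : (↑Xᶜ : Set (Fin K)) ≃ Fin (K - D) := Fintype.equivFinOfCardEq (hcard X hX)
    let f : Fin (K - D) → Fin K := fun j => (e.symm j).1
    have hf : Function.Injective f := Subtype.val_injective.comp e.symm.injective
    have hdet := hMDS f hf
    set A : Matrix (Fin (K - D)) (Fin (K - D)) F :=
      Matrix.of (fun i j => M i (f j)) with hA
    have hAunit : IsUnit A := by
      rw [Matrix.isUnit_iff_isUnit_det, isUnit_iff_ne_zero]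
      exact hdet
    have hvA : Function.Bijective (fun c : Fin (K - D) → F => c ᵥ* A) :=
      ⟨Matrix.vecMul_injective_iff_isUnit.2 hAunit,
        Matrix.vecMul_surjective_iff_isUnit.2 hAunit⟩
    have hcomp : ⇑((ψ X).comp M.vecMulLinear) =
        (⇑(Equiv.arrowCongr e.symm (Equiv.refl F))) ∘ (fun c => c ᵥ* A) := by
      funext c
      funext i
      simp only [LinearMap.coe_comp, Function.comp_apply, Matrix.vecMulLinear_apply,
        Equiv.arrowCongr_apply, Equiv.refl_symm, Equiv.coe_refl, Equiv.symm_symm,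
        ψ, LinearMap.funLeft_apply]
      simp [Matrix.vecMul, dotProduct, A, f]
    rw [hcomp]
    exact (Equiv.arrowCongr e.symm (Equiv.refl F)).bijective.comp hvA
  have hMrows : LinearMap.range M.vecMulLinear = span F (Set.range M) :=
    range_vecMulLinear M
  have hMinj : Function.Injective M.vecMulLinear := by
    have h := (key W hW).injective
    rw [LinearMap.coe_comp] at h
    exact h.of_comp
  have hrM : finrank F (span F (Set.range M)) = K - D := by
    rw [← hMrows, LinearMap.finrank_range_of_inj hMinj,
      Module.finrank_fintype_fun_eq_card, Fintype.card_fin]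
  have hrU : finrank F (span F (Set.range U)) = L := by
    have h := Matrix.rank_eq_finrank_span_row U
    rw [hU] at h
    exact h.symm
  -- elements of span rows M vanishing outside an X of card D are zero
  have hker : ∀ X : Finset (Fin K), X.card = D → ∀ v ∈ span F (Set.range M),
      (∀ j : Fin K, j ∉ X → v j = 0) → v = 0 := by
    intro X hX v hv hz
    rw [← hMrows] at hv
    obtain ⟨c, rfl⟩ := hv
    have h0 : ((ψ X).comp M.vecMulLinear) c = 0 := by
      funext i
      exact hz i.1 (by simpa using i.2)
    have := (key X hX).injective (a₁ := c) (a₂ := 0) (by simpa using h0)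
    rw [this]
    simp
  have hdisj : span F (Set.range U) ⊓ span F (Set.range M) = ⊥ := by
    rw [eq_bot_iff]
    rintro v ⟨hvU, hvM⟩
    have hvW : ∀ j : Fin K, j ∉ W → v j = 0 := by
      intro j hj
      have hle : span F (Set.range U) ≤ Submodule.pi (↑Wᶜ : Set (Fin K))
          (fun _ => (⊥ : Submodule F F)) := by
        rw [Submodule.span_le]
        rintro _ ⟨l, rfl⟩
        rw [SetLike.mem_coe, Submodule.mem_pi]
        intro i hi
        exact hsupp l i (by simpa using hi)
      have := hle hvU
      rw [Submodule.mem_pi] at this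
      exact this j (by simpa using hj)
    simpa using hker W hW v hvM hvW
  have hspan : span F (Set.range (fun i => Matrix.fromRows U M i)) =
      span F (Set.range U) ⊔ span F (Set.range M) := by
    rw [← Submodule.span_union]
    congr 1
    have : (fun i => Matrix.fromRows U M i) = Sum.elim U M := rfl
    rw [this]
    exact Set.Sum.elim_range U M
  set V : Submodule F (Fin K → F) := span F (Set.range U) ⊔ span F (Set.range M) with hV
  have hrV : finrank F V = L + (K - D) := by
    have h := Submodule.finrank_sup_add_finrank_inf_eq (span F (Set.range U))
      (span F (Set.range M))
    rw [hdisj, finrank_bot, hrU, hrM, add_zero] at h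
    exact h
  intro W' hW'
  set P : Submodule F (Fin K → F) :=
    Submodule.pi (↑W'ᶜ : Set (Fin K)) (fun _ => (⊥ : Submodule F F)) with hP
  set φ : V →ₗ[F] ((↑W'ᶜ : Set (Fin K)) → F) := (ψ W').comp V.subtype with hφ
  have hcomap : Submodule.comap V.subtype (V ⊓ P) = LinearMap.ker φ := by
    ext x
    simp only [Submodule.mem_comap, LinearMap.mem_ker, Submodule.mem_inf,
      hφ, LinearMap.comp_apply, Submodule.coe_subtype]
    constructor
    · rintro ⟨-, hp⟩
      funext i
      rw [Submodule.mem_pi] at hp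
      have := hp i.1 i.2
      exact (Submodule.mem_bot F).1 this
    · intro h
      refine ⟨x.2, ?_⟩
      rw [Submodule.mem_pi]
      intro i hi
      have := congrFun h ⟨i, hi⟩
      exact (Submodule.mem_bot F).2 this
  have hsurj : Function.Surjective φ := by
    intro y
    obtain ⟨c, hc⟩ := (key W' hW').surjective y
    have hmem : M.vecMulLinear c ∈ V := by
      apply Submodule.mem_sup_right
      rw [← hMrows]
      exact ⟨c, rfl⟩
    exact ⟨⟨M.vecMulLinear c, hmem⟩, hc⟩
  have hrange : finrank F (LinearMap.range φ) = K - D := by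
    rw [LinearMap.range_eq_top.2 hsurj, finrank_top,
      Module.finrank_fintype_fun_eq_card, hcard W' hW']
  have hrn := LinearMap.finrank_range_add_finrank_ker φ
  rw [hrange, hrV] at hrn
  have hkerL : finrank F (LinearMap.ker φ) = L := by omega
  rw [hspan]
  set_option synthInstance.maxHeartbeats 1000000 in
  have heq : finrank F (Submodule.comap V.subtype (V ⊓ P)) = finrank F ↥(V ⊓ P) :=
    (Submodule.comapSubtypeEquivOfLe (inf_le_left : V ⊓ P ≤ V)).finrank_eq
  rw [← heq, hcomap, hkerL]
end

section
/- Let 1 ≤ L ≤ D ≤ K, let m < K-D+L with m ≥ L, and let [I, P] be an m×K matrix over F_q where I is the m×m identity and P is an m×(K-m) matrix. Suppose that for every D-subset W of [K] of the form W = S ∪ Ŵ with S an L-subset of [m] and Ŵ a (D-L)-subset of [m+1 : K], the row space of [I,P] contains L linearly independent vectors supported in W. Then P is the zero matrix. -/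
/-- If m < K-D+L (m ≥ L) and the row space of [I, P] contains, for every D-subset W of
[K] of the form S ∪ Wh with S an L-subset of the first m coordinates and Wh a
(D-L)-subset of the remaining coordinates, L linearly independent vectors supported in
W, then P = 0. -/
theorem stmt_16 (F : Type*) [Field F] [Fintype F] (K D L m : ℕ)
    (hL : 1 ≤ L) (hLD : L ≤ D) (hDK : D ≤ K) (hLm : L ≤ m) (hm : m < K - D + L)
    (P : Matrix (Fin m) (Fin (K - m)) F)
    (A : Matrix (Fin m) (Fin K) F)
    (hAI : ∀ (i : Fin m) (j : Fin K) (hj : (j : ℕ) < m),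
      A i j = if (i : ℕ) = (j : ℕ) then 1 else 0)
    (hAP : ∀ (i : Fin m) (j : Fin K) (hj : m ≤ (j : ℕ)),
      A i j = P i ⟨(j : ℕ) - m, by omega⟩)
    (h : ∀ S : Finset (Fin K), S.card = L → (∀ j ∈ S, (j : ℕ) < m) →
      ∀ Wh : Finset (Fin K), Wh.card = D - L → (∀ j ∈ Wh, m ≤ (j : ℕ)) →
      ∃ v : Fin L → Fin K → F,
        (∀ i, v i ∈ Submodule.span F (Set.range (fun r => A r))) ∧
        LinearIndependent F v ∧
        ∀ i, ∀ j : Fin K, j ∉ S ∪ Wh → v i j = 0) :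
    P = 0 := by
  have hmK : m < K := by omega
  -- the embedding of low coordinates
  set emb : Fin m → Fin K := fun r => ⟨r.1, by omega⟩ with hemb
  -- key identity: every row-space vector u equals ∑ r, u (emb r) • A r
  have keyT : ∀ u ∈ Submodule.span F (Set.range (fun r => A r)),
      u = ∑ r : Fin m, u (emb r) • A r := by
    set T : (Fin K → F) →ₗ[F] (Fin K → F) :=
      ∑ r : Fin m, (LinearMap.proj (emb r)).smulRight (A r) with hT
    have hTapp : ∀ u, T u = ∑ r : Fin m, u (emb r) • A r := by
      intro u
      rw [hT]
      simp [LinearMap.sum_apply]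
    have hrows : ∀ r₀ : Fin m, T (A r₀) = A r₀ := by
      intro r₀
      rw [hTapp]
      have : ∀ r : Fin m, A r₀ (emb r) = if r = r₀ then (1 : F) else 0 := by
        intro r
        rw [hAI r₀ (emb r) (by simp [hemb])]
        simp [hemb, Fin.ext_iff, eq_comm]
      simp_rw [this, ite_smul, one_smul, zero_smul]
      exact (Finset.sum_ite_eq' Finset.univ r₀ (fun x => A x)).trans (by simp)
    intro u hu
    have hsub : Submodule.span F (Set.range (fun r => A r)) ≤
        LinearMap.eqLocus T (LinearMap.id (R := F) (M := Fin K → F)) := by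
      rw [Submodule.span_le]
      rintro _ ⟨r₀, rfl⟩
      exact hrows r₀
    have := hsub hu
    have h2 : T u = u := this
    conv_lhs => rw [← h2, hTapp]
  -- a row-space vector vanishing on all low coordinates is zero
  have keyZero : ∀ u ∈ Submodule.span F (Set.range (fun r => A r)),
      (∀ r : Fin m, u (emb r) = 0) → u = 0 := by
    intro u hu h0
    rw [keyT u hu]
    simp [h0]
  ext i j
  simp only [Matrix.zero_apply]
  set iK : Fin K := ⟨i.1, by omega⟩ with hiK
  set jK : Fin K := ⟨m + j.1, by omega⟩ with hjK
  -- construct S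
  obtain ⟨S, hSi, hSlow, hScard⟩ :
      ∃ S : Finset (Fin K), iK ∈ S ∧ (∀ x ∈ S, (x : ℕ) < m) ∧ S.card = L := by
    have hlow : (Finset.univ.filter (fun x : Fin K => (x : ℕ) < m)) =
        Finset.univ.map ⟨emb, fun a b hab => by
          simpa [hemb, Fin.ext_iff] using hab⟩ := by
      ext x
      simp only [Finset.mem_filter, Finset.mem_univ, true_and, Finset.mem_map,
        Function.Embedding.coeFn_mk]
      constructor
      · intro hx
        exact ⟨⟨x.1, hx⟩, by simp [hemb]⟩
      · rintro ⟨r, rfl⟩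
        simp [hemb]
    have hcard : (Finset.univ.filter (fun x : Fin K => (x : ℕ) < m)).card = m := by
      rw [hlow, Finset.card_map, Finset.card_univ, Fintype.card_fin]
    obtain ⟨u, hsu, hut, huc⟩ := Finset.exists_subsuperset_card_eq
      (s := {iK}) (t := Finset.univ.filter (fun x : Fin K => (x : ℕ) < m)) (n := L)
      (by simp [hiK]) (by simpa using hL) (by rw [hcard]; exact hLm)
    exact ⟨u, hsu (by simp), fun x hx => (Finset.mem_filter.mp (hut hx)).2, huc⟩
  -- construct Wh
  obtain ⟨Wh, hWsub, hWcard⟩ :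
      ∃ Wh : Finset (Fin K),
        Wh ⊆ (Finset.univ.filter (fun x : Fin K => m ≤ (x : ℕ))).erase jK ∧
        Wh.card = D - L := by
    have hhigh : (Finset.univ.filter (fun x : Fin K => m ≤ (x : ℕ))) =
        Finset.univ.map ⟨fun r : Fin (K - m) => (⟨m + r.1, by omega⟩ : Fin K),
          fun a b hab => by simpa [Fin.ext_iff] using hab⟩ := by
      ext x
      simp only [Finset.mem_filter, Finset.mem_univ, true_and, Finset.mem_map,
        Function.Embedding.coeFn_mk]
      constructor
      · intro hx
        exact ⟨⟨x.1 - m, by omega⟩, Fin.ext (show m + (x.1 - m) = x.1 by omega)⟩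
      · rintro ⟨r, rfl⟩
        exact Nat.le_add_right m r.1
    have hcard : (Finset.univ.filter (fun x : Fin K => m ≤ (x : ℕ))).card = K - m := by
      rw [hhigh, Finset.card_map, Finset.card_univ, Fintype.card_fin]
    have hjmem : jK ∈ Finset.univ.filter (fun x : Fin K => m ≤ (x : ℕ)) := by
      simp [hjK]
    have hecard : ((Finset.univ.filter (fun x : Fin K => m ≤ (x : ℕ))).erase jK).card
        = K - m - 1 := by
      rw [Finset.card_erase_of_mem hjmem, hcard]
    obtain ⟨t, hts, htc⟩ := Finset.exists_subset_card_eq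
      (s := (Finset.univ.filter (fun x : Fin K => m ≤ (x : ℕ))).erase jK)
      (n := D - L) (by rw [hecard]; omega)
    exact ⟨t, hts, htc⟩
  have hWhigh : ∀ x ∈ Wh, m ≤ (x : ℕ) :=
    fun x hx => (Finset.mem_filter.mp (Finset.mem_of_mem_erase (hWsub hx))).2
  have hjW : jK ∉ Wh := fun hx => (Finset.notMem_erase jK _) (hWsub hx)
  have hjS : jK ∉ S := fun hx => by have := hSlow jK hx; simp [hjK] at this
  obtain ⟨v, hvspan, hvind, hvsupp⟩ := h S hScard hSlow Wh hWcard hWhigh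
  -- restrictions to S
  set w : Fin L → (↥S → F) := fun t s => v t (s : Fin K) with hw
  have hwind : LinearIndependent F w := by
    rw [Fintype.linearIndependent_iff]
    intro g hg
    set u : Fin K → F := ∑ t : Fin L, g t • v t with hu
    have huspan : u ∈ Submodule.span F (Set.range (fun r => A r)) := by
      rw [hu]
      exact Submodule.sum_mem _ (fun t _ => Submodule.smul_mem _ _ (hvspan t))
    have hu0 : u = 0 := by
      apply keyZero u huspan
      intro r
      by_cases hrS : emb r ∈ S
      · have := congrFun hg (⟨emb r, hrS⟩ : ↥S)
        simpa [hu, hw, Finset.sum_apply] using this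
      · have : ∀ t : Fin L, v t (emb r) = 0 := by
          intro t
          apply hvsupp t (emb r)
          simp only [Finset.mem_union]
          rintro (hc | hc)
          · exact hrS hc
          · have := hWhigh _ hc; simp [hemb] at this; omega
        simp [hu, Finset.sum_apply, this]
    have := Fintype.linearIndependent_iff.mp hvind g (by rw [← hu, hu0])
    exact this
  -- w spans F^S
  have hspan : Submodule.span F (Set.range w) = ⊤ := by
    haveI : Nonempty (Fin L) := ⟨⟨0, hL⟩⟩
    apply hwind.span_eq_top_of_card_eq_finrank
    rw [Module.finrank_pi, Fintype.card_fin, Fintype.card_coe, hScard]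
  -- the indicator of iK restricted to S
  set δ : ↥S → F := fun s => if (s : Fin K) = iK then 1 else 0 with hδ
  obtain ⟨a, ha⟩ := (Submodule.mem_span_range_iff_exists_fun F).mp
    (hspan ▸ Submodule.mem_top : δ ∈ Submodule.span F (Set.range w))
  set u : Fin K → F := ∑ t : Fin L, a t • v t with hu
  have huspan : u ∈ Submodule.span F (Set.range (fun r => A r)) := by
    rw [hu]
    exact Submodule.sum_mem _ (fun t _ => Submodule.smul_mem _ _ (hvspan t))
  have hucoord : ∀ r : Fin m, u (emb r) = if r = i then 1 else 0 := by
    intro r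
    by_cases hrS : emb r ∈ S
    · have := congrFun ha (⟨emb r, hrS⟩ : ↥S)
      have h2 : u (emb r) = δ ⟨emb r, hrS⟩ := by
        simpa [hu, hw, Finset.sum_apply] using this
      rw [h2, hδ]
      simp [hemb, hiK, Fin.ext_iff]
    · have hne : r ≠ i := by
        rintro rfl
        apply hrS
        have : emb r = iK := by simp [hemb, hiK]
        rw [this]; exact hSi
      have : ∀ t : Fin L, v t (emb r) = 0 := by
        intro t
        apply hvsupp t (emb r)
        simp only [Finset.mem_union]
        rintro (hc | hc)
        · exact hrS hc
        · have := hWhigh _ hc; simp [hemb] at this; omega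
      simp [hu, Finset.sum_apply, this, hne]
  have huA : u = A i := by
    rw [keyT u huspan]
    simp_rw [hucoord, ite_smul, one_smul, zero_smul]
    exact (Finset.sum_ite_eq' Finset.univ i (fun x => A x)).trans (by simp)
  have hujK : u jK = 0 := by
    have : ∀ t : Fin L, v t jK = 0 := by
      intro t
      apply hvsupp t jK
      simp only [Finset.mem_union]
      rintro (hc | hc)
      · exact hjS hc
      · exact hjW hc
    simp [hu, Finset.sum_apply, this]
  have : A i jK = 0 := by rw [← huA]; exact hujK
  rw [hAP i jK (by simp [hjK])] at this
  convert this using 2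
  simp [hjK]
end

section
/- Let M be an m-dimensional subspace of F_q^K with m < K - D + L (and m ≥ L, 1 ≤ L ≤ D ≤ K). Then there exists a D-subset W of [K] such that the subspace of vectors of M supported in W has dimension strictly less than L. -/
open Module

private def zeroOn (F : Type*) [Field F] (K : ℕ) (s : Set (Fin K)) :
    Submodule F (Fin K → F) :=
  Submodule.pi s (fun _ => (⊥ : Submodule F F))

private lemma mem_zeroOn {F : Type*} [Field F] {K : ℕ} {s : Set (Fin K)} {x : Fin K → F} :
    x ∈ zeroOn F K s ↔ ∀ i ∈ s, x i = 0 := by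
  simp [zeroOn, Submodule.mem_pi]

private lemma zeroOn_anti {F : Type*} [Field F] {K : ℕ} {s t : Set (Fin K)} (h : s ⊆ t) :
    zeroOn F K t ≤ zeroOn F K s := by
  intro x hx
  rw [mem_zeroOn] at hx ⊢
  exact fun i hi => hx i (h hi)

private lemma key (F : Type*) [Field F] (K : ℕ) (N : Submodule F (Fin K → F)) :
    ∀ t : ℕ, ∃ T : Finset (Fin K), T.card ≤ t ∧
      finrank F ↥(N ⊓ zeroOn F K ↑T) ≤ finrank F N - t := by
  intro t
  induction t with
  | zero =>
    refine ⟨∅, le_rfl, ?_⟩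
    simpa using Submodule.finrank_mono (inf_le_left : N ⊓ zeroOn F K ↑(∅ : Finset (Fin K)) ≤ N)
  | succ t ih =>
    obtain ⟨T, hcard, hdim⟩ := ih
    by_cases h : N ⊓ zeroOn F K ↑T = ⊥
    · exact ⟨T, hcard.trans (Nat.le_succ t), by rw [h]; simp⟩
    · obtain ⟨v, hv, hv0⟩ := Submodule.exists_mem_ne_zero_of_ne_bot h
      obtain ⟨i, hi⟩ : ∃ i, v i ≠ 0 := by
        by_contra hc
        push_neg at hc
        exact hv0 (funext hc)
      refine ⟨insert i T, ?_, ?_⟩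
      · simpa using (Finset.card_insert_le i T).trans (Nat.succ_le_succ hcard)
      · have hlt : N ⊓ zeroOn F K ↑(insert i T) < N ⊓ zeroOn F K ↑T := by
          refine lt_of_le_of_ne ?_ ?_
          · exact inf_le_inf_left N (zeroOn_anti (by simp [Finset.coe_insert, Set.subset_insert]))
          · intro he
            have : v ∈ N ⊓ zeroOn F K ↑(insert i T) := he ▸ hv
            have := (mem_zeroOn.mp this.2) i (by simp)
            exact hi this
        have := Submodule.finrank_lt_finrank_of_lt hlt
        omega
/-- If M is an m-dimensional subspace of F_q^K with L ≤ m < K-D+L, then some D-subset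
W of [K] carries a supported subspace of M of dimension strictly less than L. -/
theorem stmt_17 (F : Type*) [Field F] [Fintype F] (K D L m : ℕ)
    (hL : 1 ≤ L) (hLD : L ≤ D) (hDK : D ≤ K) (hLm : L ≤ m) (hm : m < K - D + L)
    (M : Submodule F (Fin K → F)) (hMdim : Module.finrank F M = m) :
    ∃ W : Finset (Fin K), W.card = D ∧
      Module.finrank F
        ↥(M ⊓ Submodule.pi ((↑Wᶜ : Set (Fin K))) (fun _ => (⊥ : Submodule F F))) < L := by
  obtain ⟨T, hTcard, hTdim⟩ := key F K M (m - L + 1)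
  rw [hMdim] at hTdim
  -- choose W ⊆ Tᶜ with card D
  have hTc : D ≤ Tᶜ.card := by
    have : Tᶜ.card = K - T.card := by
      simp [Finset.card_compl]
    omega
  obtain ⟨W, hWsub, hWcard⟩ := Finset.exists_subset_card_eq hTc
  refine ⟨W, hWcard, ?_⟩
  have hTW : (↑T : Set (Fin K)) ⊆ ↑Wᶜ := by
    intro x hx
    simp only [Finset.coe_compl, Set.mem_compl_iff, Finset.mem_coe]
    intro hxW
    have := hWsub hxW
    simp at this
    exact this hx
  have hle : M ⊓ zeroOn F K ↑Wᶜ ≤ M ⊓ zeroOn F K ↑T :=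
    inf_le_inf_left M (zeroOn_anti hTW)
  have := Submodule.finrank_mono hle
  have hfin : Module.finrank F
      ↥(M ⊓ Submodule.pi ((↑Wᶜ : Set (Fin K))) (fun _ => (⊥ : Submodule F F)))
      = Module.finrank F ↥(M ⊓ zeroOn F K ↑Wᶜ) := rfl
  omega
end
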